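/- Let σ > 0 and β_j, β_k ∈ ℝ. Let W_j and W_k be independent real random variables, with W_j Gaussian with mean β_j and variance σ² and W_k Gaussian with mean β_k and variance σ², and set c_j = |W_j|, c_k = |W_k|. Then P(c_j < c_k) = 2·L((|β_j| − |β_k|)/(√2·σ), −|β_k|/σ, 1/√2) + 2·L((|β_j| + |β_k|)/(√2·σ), |β_k|/σ, 1/√2) + Φ((|β_j| − |β_k|)/(√2·σ)) + Φ((|β_j| + |β_k|)/(√2·σ)) − 2. -/

import Mathlib

open MeasureTheory ProbabilityTheory Real

/-- The standard normal cumulative distribution function Φ. -/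
noncomputable def stdNormalCDF (x : ℝ) : ℝ :=
  ((gaussianReal 0 1) (Set.Iic x)).toReal

/-- `L(a, b, 1/√2) = P(X₁ > a, X₂ > b)` where `X₁ = Z₁`, `X₂ = (Z₁ + Z₂)/√2` for
`Z₁, Z₂` independent standard normals, so that `(X₁, X₂)` is bivariate normal with
standard normal marginals and correlation `1/√2`. -/
noncomputable def Lorthant (a b : ℝ) : ℝ :=
  (((gaussianReal 0 1).prod (gaussianReal 0 1))
    {z : ℝ × ℝ | a < z.1 ∧ b < (z.1 + z.2) / Real.sqrt 2}).toReal

/-!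
Write `W_j = σ (X + A)` and `W_k = σ (Y + B)` with `X, Y` independent standard normal,
`A = β_j / σ`, `B = β_k / σ`. Since `(y + B)² - (x + A)² = (x + y + A + B) (y - x + B - A)`,
the event `|x + A| < |y + B|` becomes a union of two opposite quadrants in the coordinates
`((x + y) / √2, (y - x) / √2)`. The standard Gaussian on the plane is invariant under this
rotation by `π / 4`, so the probability is `Φ a + Φ b - 2 Φ a Φ b` with `a = (A - B) / √2`,
`b = (A + B) / √2`, an expression unchanged by `A ↦ -A` and `B ↦ -B`.

The orthant probabilities enter only through `L(a, (a - b)/√2) + L(b, (b - a)/√2) = 1 - Φ a Φ b`: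
up to three null lines, the first orthant, the image of the second under `(x, y) ↦ (-y, -x)`
and the quadrant `{x < a, y > -b}` tile the plane.
-/

open Set

local notation "γ" => gaussianReal 0 1
local notation "γ²" => Measure.prod (gaussianReal 0 1) (gaussianReal 0 1)
local notation "Φ" => stdNormalCDF

instance : NullSingletonClass γ := nullSingletonClass_gaussianReal one_ne_zero

lemma measurePreserving_neg_gaussianReal (v : NNReal) :
    MeasurePreserving (fun x : ℝ ↦ -x) (gaussianReal 0 v) (gaussianReal 0 v) :=
  ⟨measurable_neg, by rw [gaussianReal_map_neg, neg_zero]⟩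

lemma measurePreserving_neg_swap_gaussianReal (v : NNReal) :
    MeasurePreserving (fun p : ℝ × ℝ ↦ (-p.2, -p.1))
      ((gaussianReal 0 v).prod (gaussianReal 0 v)) ((gaussianReal 0 v).prod (gaussianReal 0 v)) :=
  Measure.measurePreserving_swap.comp
    ((measurePreserving_neg_gaussianReal v).prod (measurePreserving_neg_gaussianReal v))

lemma measurePreserving_rotation_gaussianReal (v : NNReal) (θ : ℝ) :
    MeasurePreserving (ContinuousLinearMap.rotation θ)
      ((gaussianReal 0 v).prod (gaussianReal 0 v)) ((gaussianReal 0 v).prod (gaussianReal 0 v)) :=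
  ⟨(ContinuousLinearMap.rotation θ).continuous.measurable,
    IsGaussian.map_rotation_eq_self (by simp [integral_id_gaussianReal]) θ⟩

lemma rotation_pi_div_four_apply (p : ℝ × ℝ) :
    ContinuousLinearMap.rotation (π / 4) p = ((p.1 + p.2) / √2, (p.2 - p.1) / √2) := by
  have h : √2 / 2 = (√2)⁻¹ := sqrt_div_self
  rw [ContinuousLinearMap.rotation_apply, cos_pi_div_four, sin_pi_div_four, h]
  ext <;> simp only [smul_eq_mul] <;> ring

lemma measure_prod_fst_eq_null {α β : Type*} [MeasurableSpace α] [MeasurableSpace β]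
    {μ : Measure α} [NullSingletonClass μ] (ν : Measure β) (c : α) :
    (μ.prod ν) {p | p.1 = c} = 0 :=
  Measure.quasiMeasurePreserving_fst.preimage_null (measure_singleton c)

lemma measure_prod_snd_eq_null {α β : Type*} [MeasurableSpace α] [MeasurableSpace β]
    (μ : Measure α) {ν : Measure β} [NullSingletonClass ν] (c : β) :
    (μ.prod ν) {p | p.2 = c} = 0 :=
  Measure.quasiMeasurePreserving_snd.preimage_null (measure_singleton c)

lemma measure_gaussianReal_prod_add_eq_null {v : NNReal} (hv : v ≠ 0) (c : ℝ) :
    ((gaussianReal 0 v).prod (gaussianReal 0 v)) {p | p.1 + p.2 = c} = 0 := by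
  have := nullSingletonClass_gaussianReal (μ := 0) hv
  have h : {p : ℝ × ℝ | p.1 + p.2 = c} =
      ContinuousLinearMap.rotation (π / 4) ⁻¹' {q | q.1 = c / √2} := by
    ext p
    simp [rotation_pi_div_four_apply]
  rw [h, (measurePreserving_rotation_gaussianReal v _).measure_preimage
    (measurableSet_eq_fun measurable_fst measurable_const).nullMeasurableSet]
  exact measure_prod_fst_eq_null _ _

lemma stdNormalCDF_eq_measureReal_Iio (t : ℝ) : Φ t = (γ).real (Iio t) :=
  measureReal_congr Iio_ae_eq_Iic.symm

lemma measureReal_Ioi_eq_one_sub_stdNormalCDF (t : ℝ) : (γ).real (Ioi t) = 1 - Φ t := by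
  rw [← compl_Iic, probReal_compl_eq_one_sub measurableSet_Iic]
  rfl

lemma stdNormalCDF_neg (t : ℝ) : Φ (-t) = 1 - Φ t := by
  have h : (fun x : ℝ ↦ -x) ⁻¹' Iic (-t) = Ici t := by ext; simp
  rw [← measureReal_Ioi_eq_one_sub_stdNormalCDF, measureReal_congr Ioi_ae_eq_Ici, ← h,
    (measurePreserving_neg_gaussianReal 1).measureReal_preimage measurableSet_Iic.nullMeasurableSet]
  rfl

lemma abs_add_lt_abs_add_iff (x y A B : ℝ) :
    |x + A| < |y + B| ↔
      (-(A + B) < x + y ∧ A - B < y - x) ∨ (x + y < -(A + B) ∧ y - x < A - B) := by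
  have h : (y + B) ^ 2 - (x + A) ^ 2 = (x + y + (A + B)) * (y - x - (A - B)) := by ring
  rw [← sq_lt_sq, ← sub_pos, h, mul_pos_iff]
  constructor <;> rintro (⟨h₁, h₂⟩ | ⟨h₁, h₂⟩)
  exacts [.inl ⟨by linarith, by linarith⟩, .inr ⟨by linarith, by linarith⟩,
    .inl ⟨by linarith, by linarith⟩, .inr ⟨by linarith, by linarith⟩]

noncomputable def absAddLtAbsAddProb (A B : ℝ) : ℝ :=
  Φ ((A - B) / √2) + Φ ((A + B) / √2) - 2 * Φ ((A - B) / √2) * Φ ((A + B) / √2)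

lemma measureReal_abs_add_lt_abs_add (A B : ℝ) :
    (γ²).real {p | |p.1 + A| < |p.2 + B|} = absAddLtAbsAddProb A B := by
  have h2 : (0 : ℝ) < √2 := by positivity
  set a := (A - B) / √2
  set b := (A + B) / √2
  have hset : {p : ℝ × ℝ | |p.1 + A| < |p.2 + B|} = ContinuousLinearMap.rotation (π / 4) ⁻¹'
      (Ioi (-b) ×ˢ Ioi a ∪ Iio (-b) ×ˢ Iio a) := by
    ext p
    simp only [mem_ofPred_eq, mem_preimage, rotation_pi_div_four_apply, mem_union, mem_prod,
      mem_Ioi, mem_Iio, a, b, ← neg_div, div_lt_div_iff_of_pos_right h2, abs_add_lt_abs_add_iff]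
  have hdisj : Disjoint (Ioi (-b) ×ˢ Ioi a) (Iio (-b) ×ˢ Iio a) :=
    disjoint_prod.2 (.inl Ioi_disjoint_Iio_same)
  rw [hset, (measurePreserving_rotation_gaussianReal 1 _).measureReal_preimage
      ((measurableSet_Ioi.prod measurableSet_Ioi).union
        (measurableSet_Iio.prod measurableSet_Iio)).nullMeasurableSet,
    measureReal_union hdisj (measurableSet_Iio.prod measurableSet_Iio),
    measureReal_prod_prod, measureReal_prod_prod, measureReal_Ioi_eq_one_sub_stdNormalCDF,
    measureReal_Ioi_eq_one_sub_stdNormalCDF, ← stdNormalCDF_eq_measureReal_Iio,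
    ← stdNormalCDF_eq_measureReal_Iio, stdNormalCDF_neg, absAddLtAbsAddProb]
  ring

lemma absAddLtAbsAddProb_neg_left (A B : ℝ) :
    absAddLtAbsAddProb (-A) B = absAddLtAbsAddProb A B := by
  have h₁ : (-A - B) / √2 = -((A + B) / √2) := by ring
  have h₂ : (-A + B) / √2 = -((A - B) / √2) := by ring
  rw [absAddLtAbsAddProb, absAddLtAbsAddProb, h₁, h₂, stdNormalCDF_neg, stdNormalCDF_neg]
  ring

lemma absAddLtAbsAddProb_neg_right (A B : ℝ) :
    absAddLtAbsAddProb A (-B) = absAddLtAbsAddProb A B := by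
  rw [absAddLtAbsAddProb, absAddLtAbsAddProb, sub_neg_eq_add, ← sub_eq_add_neg]
  ring

lemma absAddLtAbsAddProb_abs (A B : ℝ) :
    absAddLtAbsAddProb |A| |B| = absAddLtAbsAddProb A B := by
  rcases abs_choice A with hA | hA <;> rcases abs_choice B with hB | hB <;>
    simp only [hA, hB, absAddLtAbsAddProb_neg_left, absAddLtAbsAddProb_neg_right]

lemma Lorthant_eq_measureReal (a c : ℝ) :
    Lorthant a c = (γ²).real {p | a < p.1 ∧ c * √2 < p.1 + p.2} := by
  simp only [Lorthant, lt_div_iff₀ (show (0 : ℝ) < √2 by positivity)]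
  rfl

lemma Lorthant_eq_measureReal_neg_swap (a b : ℝ) :
    Lorthant b ((b - a) / √2) = (γ²).real {p | p.2 < -b ∧ p.1 + p.2 < a - b} := by
  have hR : MeasurableSet {p : ℝ × ℝ | p.2 < -b ∧ p.1 + p.2 < a - b} := by measurability
  rw [Lorthant_eq_measureReal, div_mul_cancel₀ _ (by positivity),
    ← (measurePreserving_neg_swap_gaussianReal 1).measureReal_preimage hR.nullMeasurableSet]
  congr 1
  ext p
  simp only [mem_preimage, mem_ofPred_eq]
  constructor <;> rintro ⟨h₁, h₂⟩ <;> constructor <;> linarith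

lemma tiling_ae_eq_univ (a b : ℝ) :
    ({p | a < p.1 ∧ a - b < p.1 + p.2} ∪ {p | p.2 < -b ∧ p.1 + p.2 < a - b} ∪
      Iio a ×ˢ Ioi (-b) : Set (ℝ × ℝ)) =ᵐ[γ²] univ := by
  have hnull : (γ²) ({p | p.1 = a} ∪ {p | p.2 = -b} ∪ {p | p.1 + p.2 = a - b} : Set (ℝ × ℝ)) = 0 :=
    measure_union_null (measure_union_null (measure_prod_fst_eq_null _ a)
      (measure_prod_snd_eq_null _ (-b))) (measure_gaussianReal_prod_add_eq_null one_ne_zero _)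
  refine ae_eq_univ.2 (measure_mono_null ?_ hnull)
  intro p hp
  simp only [mem_compl_iff, mem_union, mem_ofPred_eq, mem_prod, mem_Iio, mem_Ioi, not_or,
    not_and, not_lt] at hp ⊢
  obtain ⟨⟨h₁, h₂⟩, h₃⟩ := hp
  rcases lt_trichotomy p.1 a with hx | hx | hx
  · exact .inl (.inr (le_antisymm (h₃ hx) (not_lt.1 fun hy ↦ by linarith [h₂ hy])))
  · exact .inl (.inl hx)
  · exact .inr (le_antisymm (h₁ hx) (not_lt.1 fun hs ↦ by linarith [h₂ (by linarith)]))

lemma Lorthant_add_Lorthant (a b : ℝ) :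
    Lorthant a ((a - b) / √2) + Lorthant b ((b - a) / √2) = 1 - Φ a * Φ b := by
  set R₁ : Set (ℝ × ℝ) := {p | a < p.1 ∧ a - b < p.1 + p.2}
  set R₂ : Set (ℝ × ℝ) := {p | p.2 < -b ∧ p.1 + p.2 < a - b}
  set R₃ : Set (ℝ × ℝ) := Iio a ×ˢ Ioi (-b)
  have hL₁ : Lorthant a ((a - b) / √2) = (γ²).real R₁ := by
    rw [Lorthant_eq_measureReal, div_mul_cancel₀ _ (by positivity)]
  have hP₃ : (γ²).real R₃ = Φ a * Φ b := by
    rw [measureReal_prod_prod, ← stdNormalCDF_eq_measureReal_Iio,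
      measureReal_Ioi_eq_one_sub_stdNormalCDF, stdNormalCDF_neg, sub_sub_cancel]
  have h₁₂ : Disjoint R₁ R₂ := disjoint_left.2 fun p ⟨_, h₁⟩ ⟨_, h₂⟩ ↦ by linarith
  have h₁₂₃ : Disjoint (R₁ ∪ R₂) R₃ := by
    refine disjoint_union_left.2 ⟨disjoint_left.2 ?_, disjoint_left.2 ?_⟩
    · rintro p ⟨h₁, _⟩ ⟨h₂, _⟩
      exact (lt_asymm h₁ h₂).elim
    · rintro p ⟨h₁, _⟩ ⟨_, h₂⟩
      exact (lt_asymm h₁ h₂).elim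
  have h := measureReal_congr (tiling_ae_eq_univ a b)
  rw [measureReal_union h₁₂₃ (measurableSet_Iio.prod measurableSet_Ioi),
    measureReal_union h₁₂ (by measurability), probReal_univ] at h
  rw [hL₁, Lorthant_eq_measureReal_neg_swap, ← hP₃]
  linarith

lemma absAddLtAbsAddProb_eq_Lorthant (A B : ℝ) :
    absAddLtAbsAddProb A B =
      2 * Lorthant ((A - B) / √2) (-B) + 2 * Lorthant ((A + B) / √2) B
        + Φ ((A - B) / √2) + Φ ((A + B) / √2) - 2 := by
  have h2 : √2 ^ 2 = 2 := sq_sqrt zero_le_two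
  have hL := Lorthant_add_Lorthant ((A - B) / √2) ((A + B) / √2)
  rw [show ((A - B) / √2 - (A + B) / √2) / √2 = -B by field_simp; linear_combination B * h2,
    show ((A + B) / √2 - (A - B) / √2) / √2 = B by field_simp; linear_combination -B * h2] at hL
  rw [absAddLtAbsAddProb]
  linear_combination -2 * hL

lemma preimage_mul_add_abs_lt_abs {σ : ℝ} (hσ : 0 < σ) (β₁ β₂ : ℝ) :
    Prod.map (σ * · + β₁) (σ * · + β₂) ⁻¹' {p : ℝ × ℝ | |p.1| < |p.2|} =
      {p | |p.1 + β₁ / σ| < |p.2 + β₂ / σ|} := by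
  ext p
  have h₁ : σ * p.1 + β₁ = σ * (p.1 + β₁ / σ) := by field_simp
  have h₂ : σ * p.2 + β₂ = σ * (p.2 + β₂ / σ) := by field_simp
  simp only [mem_preimage, Prod.map_fst, Prod.map_snd, mem_ofPred_eq, h₁, h₂, abs_mul,
    abs_of_pos hσ, mul_lt_mul_iff_right₀ hσ]

lemma gaussianReal_eq_map_mul_add (σ β : ℝ) :
    gaussianReal β (σ ^ 2).toNNReal = (γ).map (fun x ↦ σ * x + β) := by
  have h : (fun x : ℝ ↦ σ * x + β) = (· + β) ∘ (σ * ·) := rfl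
  rw [h, ← Measure.map_map (measurable_add_const β) (measurable_const_mul σ),
    gaussianReal_map_const_mul, gaussianReal_map_add_const, mul_zero, zero_add, mul_one,
    Real.toNNReal_of_nonneg (sq_nonneg σ)]

lemma map_prodMk_eq_map_prodMap_gaussianReal {Ω : Type*} [MeasurableSpace Ω] {μ : Measure Ω}
    {X Y : Ω → ℝ} {σ βX βY : ℝ} (hX : Measurable X) (hY : Measurable Y) (hXY : IndepFun X Y μ)
    (hXlaw : μ.map X = gaussianReal βX (σ ^ 2).toNNReal)
    (hYlaw : μ.map Y = gaussianReal βY (σ ^ 2).toNNReal) :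
    μ.map (fun ω ↦ (X ω, Y ω)) = (γ²).map (Prod.map (σ * · + βX) (σ * · + βY)) := by
  have : SigmaFinite (μ.map X) := by rw [hXlaw]; infer_instance
  have : SigmaFinite (μ.map Y) := by rw [hYlaw]; infer_instance
  rw [(indepFun_iff_map_prod_eq_prod_map_map' hX.aemeasurable hY.aemeasurable ‹_› ‹_›).1 hXY,
    hXlaw, hYlaw, gaussianReal_eq_map_mul_add, gaussianReal_eq_map_mul_add,
    Measure.map_prod_map _ _ (by fun_prop) (by fun_prop)]

theorem abs_gaussian_compare_prob_general
    {Ω : Type*} [MeasurableSpace Ω] (μ : Measure Ω)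
    (σ βj βk : ℝ) (hσ : 0 < σ)
    (Wj Wk : Ω → ℝ) (hWjm : Measurable Wj) (hWkm : Measurable Wk)
    (hind : IndepFun Wj Wk μ)
    (hWj : Measure.map Wj μ = gaussianReal βj (Real.toNNReal (σ ^ 2)))
    (hWk : Measure.map Wk μ = gaussianReal βk (Real.toNNReal (σ ^ 2))) :
    (μ {ω | |Wj ω| < |Wk ω|}).toReal =
      2 * Lorthant ((|βj| - |βk|) / (Real.sqrt 2 * σ)) (-|βk| / σ)
        + 2 * Lorthant ((|βj| + |βk|) / (Real.sqrt 2 * σ)) (|βk| / σ)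
        + stdNormalCDF ((|βj| - |βk|) / (Real.sqrt 2 * σ))
        + stdNormalCDF ((|βj| + |βk|) / (Real.sqrt 2 * σ)) - 2 := by
  have hS : MeasurableSet {p : ℝ × ℝ | |p.1| < |p.2|} := by measurability
  have hprob : μ.real {ω | |Wj ω| < |Wk ω|} = absAddLtAbsAddProb (|βj| / σ) (|βk| / σ) := by
    change μ.real ((fun ω ↦ (Wj ω, Wk ω)) ⁻¹' {p : ℝ × ℝ | |p.1| < |p.2|}) = _
    rw [← map_measureReal_apply (hWjm.prodMk hWkm) hS,
      map_prodMk_eq_map_prodMap_gaussianReal hWjm hWkm hind hWj hWk,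
      map_measureReal_apply (by fun_prop) hS, preimage_mul_add_abs_lt_abs hσ,
      measureReal_abs_add_lt_abs_add, ← absAddLtAbsAddProb_abs, abs_div, abs_div, abs_of_pos hσ]
  rw [← measureReal_def, hprob, absAddLtAbsAddProb_eq_Lorthant, neg_div,
    show (|βj| / σ - |βk| / σ) / √2 = (|βj| - |βk|) / (√2 * σ) by field_simp,
    show (|βj| / σ + |βk| / σ) / √2 = (|βj| + |βk|) / (√2 * σ) by field_simp]

theorem abs_gaussian_compare_prob
    {Ω : Type*} [MeasurableSpace Ω] (μ : Measure Ω) [IsProbabilityMeasure μ]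
    (σ βj βk : ℝ) (hσ : 0 < σ)
    (Wj Wk : Ω → ℝ) (hWjm : Measurable Wj) (hWkm : Measurable Wk)
    (hind : IndepFun Wj Wk μ)
    (hWj : Measure.map Wj μ = gaussianReal βj (Real.toNNReal (σ ^ 2)))
    (hWk : Measure.map Wk μ = gaussianReal βk (Real.toNNReal (σ ^ 2))) :
    (μ {ω | |Wj ω| < |Wk ω|}).toReal =
      2 * Lorthant ((|βj| - |βk|) / (Real.sqrt 2 * σ)) (-|βk| / σ)
        + 2 * Lorthant ((|βj| + |βk|) / (Real.sqrt 2 * σ)) (|βk| / σ)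
        + stdNormalCDF ((|βj| - |βk|) / (Real.sqrt 2 * σ))
        + stdNormalCDF ((|βj| + |βk|) / (Real.sqrt 2 * σ)) - 2 :=
  abs_gaussian_compare_prob_general μ σ βj βk hσ Wj Wk hWjm hWkm hind hWj hWk
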